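/- Let B be a unital (not necessarily associative) K-algebra with an involution σ, and let q∈K, q≠0. Then the linear map R : B⊗C(K,q) → C(K,q)⊗B uniquely defined by R(b⊗1) = 1⊗b and R(b⊗v) = v⊗σ(b) for all b∈B is an alternative twisting map (with respect to the decomposition C(K,q) = K·1 ⊕ K·v). -/

import Mathlib

open TensorProduct LinearMap

section TwistPreamble

variable (K : Type*) [Field K]
variable (A : Type*) [NonAssocRing A] [Module K A] [SMulCommClass K A A] [IsScalarTower K A A]
variable (B : Type*) [NonAssocRing B] [Module K B] [SMulCommClass K B B] [IsScalarTower K B B]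

/-- Sweedler helper: sends `Σ aR ⊗ bR` in `A ⊗ B` to `Σ (aR * a'_r) ⊗ (bR)_r`,
where `R((bR) ⊗ a') = a'_r ⊗ (bR)_r`. -/
noncomputable def attpRmul (R : B ⊗[K] A →ₗ[K] A ⊗[K] B) (a' : A) :
    A ⊗[K] B →ₗ[K] A ⊗[K] B :=
  (rTensor B (LinearMap.mul' K A)) ∘ₗ (TensorProduct.assoc K A A B).symm.toLinearMap ∘ₗ
    (lTensor A (R ∘ₗ (TensorProduct.mk K B A).flip a'))

/-- Sweedler helper: sends `Σ aR ⊗ b'R` in `A ⊗ B` to `Σ (aR)_r ⊗ (b'R * b_r)`,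
where `R(b ⊗ aR) = (aR)_r ⊗ b_r`. -/
noncomputable def attpLmul (R : B ⊗[K] A →ₗ[K] A ⊗[K] B) (b : B) :
    A ⊗[K] B →ₗ[K] A ⊗[K] B :=
  (lTensor A ((LinearMap.mul' K B) ∘ₗ (TensorProduct.comm K B B).toLinearMap)) ∘ₗ
    (TensorProduct.assoc K A B B).toLinearMap ∘ₗ
    (rTensor B (R ∘ₗ (TensorProduct.mk K B A) b))

/-- `R : B ⊗ A → A ⊗ B` is an alternative twisting map w.r.t. the decomposition
`A = K·1_A ⊕ A₀`. -/
def IsAltTwistingMap (A₀ : Submodule K A) (R : B ⊗[K] A →ₗ[K] A ⊗[K] B) : Prop :=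
  (∀ a : A, R ((1 : B) ⊗ₜ[K] a) = a ⊗ₜ[K] (1 : B)) ∧
  (∀ b : B, R (b ⊗ₜ[K] (1 : A)) = (1 : A) ⊗ₜ[K] b) ∧
  (∀ (a a' : A) (b : B), R (b ⊗ₜ[K] (a * a')) = attpRmul K A B R a' (R (b ⊗ₜ[K] a))) ∧
  (∀ a ∈ A₀, ∀ b b' : B, R ((b * b') ⊗ₜ[K] a) = attpLmul K A B R b (R (b' ⊗ₜ[K] a)))

/-- `m` is the multiplication of the alternative twisted tensor product `A ⊗̄_R B`:
`(1⊗b)(a'⊗b') = a'_R ⊗ b_R b'` and, for `a ∈ A₀`, `(a⊗b)(a'⊗b') = a a'_R ⊗ b' b_R`. -/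
def IsAltMul (A₀ : Submodule K A) (R : B ⊗[K] A →ₗ[K] A ⊗[K] B)
    (m : A ⊗[K] B →ₗ[K] A ⊗[K] B →ₗ[K] A ⊗[K] B) : Prop :=
  (∀ (b : B) (a' : A) (b' : B),
      m ((1 : A) ⊗ₜ[K] b) (a' ⊗ₜ[K] b') = (lTensor A (mulRight K b')) (R (b ⊗ₜ[K] a'))) ∧
  (∀ a ∈ A₀, ∀ (b : B) (a' : A) (b' : B),
      m (a ⊗ₜ[K] b) (a' ⊗ₜ[K] b') =
        (TensorProduct.map (mulLeft K a) (mulLeft K b')) (R (b ⊗ₜ[K] a')))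

end TwistPreamble

/-! Every axiom is linear in its argument from `C(K,q)`, which is spanned by `1` and `v`, so it
suffices to check it on these two elements. On `1` the axioms are immediate; on `v` they come
down to `v * v = q • 1` and to `σ` being an involutive antiautomorphism. -/

section Quadratic

open Polynomial

namespace AdjoinRoot

theorem span_one_root_eq_top {R : Type*} [CommRing R] {f : R[X]} (hf : f.Monic)
    (hdeg : f.natDegree = 2) : Submodule.span R {1, root f} = ⊤ := by
  let pb := powerBasis' hf
  rw [eq_top_iff, ← pb.basis.span_eq, Submodule.span_le]
  rintro _ ⟨i, rfl⟩
  have hi : (i : ℕ) < 2 := hdeg ▸ i.2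
  rw [pb.basis_eq_pow, powerBasis'_gen]
  interval_cases (i : ℕ)
  · rw [pow_zero]
    exact Submodule.subset_span (Set.mem_insert _ _)
  · rw [pow_one]
    exact Submodule.subset_span (Set.mem_insert_of_mem _ rfl)

theorem root_mul_root_X_sq_sub_C {R : Type*} [CommRing R] (q : R) :
    root (X ^ 2 - C q) * root (X ^ 2 - C q) = q • (1 : AdjoinRoot (X ^ 2 - C q)) := by
  have h := eval₂_root (X ^ 2 - C q)
  simp only [eval₂_sub, eval₂_X_pow, eval₂_C, sub_eq_zero] at h
  rw [← sq, h, Algebra.smul_def, mul_one]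
  rfl

end AdjoinRoot

end Quadratic

theorem LinearMap.ext_of_span_pair_eq_top {R M N : Type*} [Semiring R] [AddCommMonoid M]
    [Module R M] [AddCommMonoid N] [Module R N] {x y : M}
    (hspan : Submodule.span R {x, y} = ⊤) {f g : M →ₗ[R] N} (hx : f x = g x) (hy : f y = g y) :
    f = g :=
  ext_on hspan (by rintro _ (rfl | rfl) <;> assumption)

section Twisting

variable {K A B : Type*} [Field K] [NonAssocRing A] [Module K A] [NonAssocRing B] [Module K B]

theorem attpRmul_tmul [SMulCommClass K A A] [IsScalarTower K A A]
    (R : B ⊗[K] A →ₗ[K] A ⊗[K] B) (a a' : A) (b : B) :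
    attpRmul K A B R a' (a ⊗ₜ b) = rTensor B (mulLeft K a) (R (b ⊗ₜ a')) := by
  simp only [attpRmul, coe_comp, Function.comp_apply, lTensor_tmul, flip_apply, mk_apply]
  induction R (b ⊗ₜ a') using TensorProduct.induction_on with
  | zero => simp only [tmul_zero, map_zero]
  | tmul x y => simp only [LinearEquiv.coe_coe, assoc_symm_tmul, rTensor_tmul, mul'_apply,
      mulLeft_apply]
  | add x y hx hy => simp only [tmul_add, map_add, hx, hy]

theorem attpLmul_tmul [SMulCommClass K B B] [IsScalarTower K B B]
    (R : B ⊗[K] A →ₗ[K] A ⊗[K] B) (a : A) (b b' : B) :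
    attpLmul K A B R b (a ⊗ₜ b') = lTensor A (mulLeft K b') (R (b ⊗ₜ a)) := by
  simp only [attpLmul, coe_comp, Function.comp_apply, rTensor_tmul, mk_apply]
  induction R (b ⊗ₜ a) using TensorProduct.induction_on with
  | zero => simp only [zero_tmul, map_zero]
  | tmul x y => simp only [LinearEquiv.coe_coe, assoc_tmul, lTensor_tmul, coe_comp,
      Function.comp_apply, comm_tmul, mul'_apply, mulLeft_apply]
  | add x y hx hy => simp only [add_tmul, map_add, hx, hy]

variable [SMulCommClass K A A] [IsScalarTower K A A] [SMulCommClass K B B] [IsScalarTower K B B]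
  {v : A} {q : K} {σ : B →ₗ[K] B} {R : B ⊗[K] A →ₗ[K] A ⊗[K] B}

theorem isAltTwistingMap_of_involution (hspan : Submodule.span K {1, v} = ⊤)
    (hvv : v * v = q • 1) (hσmul : ∀ x y : B, σ (x * y) = σ y * σ x) (hσone : σ 1 = 1)
    (hσinv : ∀ x : B, σ (σ x) = x) (hR1 : ∀ b : B, R (b ⊗ₜ 1) = 1 ⊗ₜ b)
    (hRv : ∀ b : B, R (b ⊗ₜ v) = v ⊗ₜ σ b) :
    IsAltTwistingMap K A B (Submodule.span K {v}) R := by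
  have hR_v_mul (b : B) (a' : A) :
      R (b ⊗ₜ (v * a')) = rTensor B (mulLeft K v) (R (σ b ⊗ₜ a')) := by
    refine congr($(ext_of_span_pair_eq_top hspan (f := R ∘ₗ mk K B A b ∘ₗ mulLeft K v)
      (g := rTensor B (mulLeft K v) ∘ₗ R ∘ₗ mk K B A (σ b)) ?_ ?_) a')
    · simp [hR1, hRv]
    · simp [hvv, hR1, hRv, hσinv, smul_tmul']
  refine ⟨fun a => ?_, hR1, fun a a' b => ?_, fun a ha b b' => ?_⟩
  · refine congr($(ext_of_span_pair_eq_top hspan (f := R ∘ₗ mk K B A 1)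
      (g := (mk K A B).flip 1) ?_ ?_) a)
    · simp [hR1]
    · simp [hRv, hσone]
  · refine congr($(ext_of_span_pair_eq_top hspan (f := R ∘ₗ mk K B A b ∘ₗ mulRight K a')
      (g := attpRmul K A B R a' ∘ₗ R ∘ₗ mk K B A b) ?_ ?_) a)
    · simp [hR1, attpRmul_tmul]
    · simp [hRv, attpRmul_tmul, hR_v_mul]
  · obtain ⟨c, rfl⟩ := Submodule.mem_span_singleton.mp ha
    simp [hRv, attpLmul_tmul, hσmul]

end Twisting

theorem stmt2_general (K B : Type*) [Field K]
    [NonAssocRing B] [Module K B] [SMulCommClass K B B] [IsScalarTower K B B]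
    (σ : B →ₗ[K] B) (hσmul : ∀ x y : B, σ (x * y) = σ y * σ x)
    (hσone : σ 1 = 1) (hσinv : ∀ x : B, σ (σ x) = x)
    (q : K)
    (R : B ⊗[K] (AdjoinRoot (Polynomial.X ^ 2 - Polynomial.C q)) →ₗ[K]
         (AdjoinRoot (Polynomial.X ^ 2 - Polynomial.C q)) ⊗[K] B)
    (hR1 : ∀ b : B,
      R (b ⊗ₜ[K] (1 : AdjoinRoot (Polynomial.X ^ 2 - Polynomial.C q))) = 1 ⊗ₜ[K] b)
    (hRv : ∀ b : B,
      R (b ⊗ₜ[K] AdjoinRoot.root (Polynomial.X ^ 2 - Polynomial.C q)) =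
        (AdjoinRoot.root (Polynomial.X ^ 2 - Polynomial.C q)) ⊗ₜ[K] σ b) :
    IsAltTwistingMap K (AdjoinRoot (Polynomial.X ^ 2 - Polynomial.C q)) B
      (Submodule.span K ({AdjoinRoot.root (Polynomial.X ^ 2 - Polynomial.C q)} :
        Set (AdjoinRoot (Polynomial.X ^ 2 - Polynomial.C q)))) R :=
  isAltTwistingMap_of_involution
    (AdjoinRoot.span_one_root_eq_top (Polynomial.monic_X_pow_sub_C q two_ne_zero)
      (Polynomial.natDegree_X_pow_sub_C))
    (AdjoinRoot.root_mul_root_X_sq_sub_C q) hσmul hσone hσinv hR1 hRv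

/-- for an algebra `B` with involution `σ` and `q ≠ 0`, the linear map
`R : B ⊗ C(K,q) → C(K,q) ⊗ B` with `R(b⊗1) = 1⊗b`, `R(b⊗v) = v⊗σ(b)` is an
alternative twisting map w.r.t. the decomposition `C(K,q) = K·1 ⊕ K·v`. -/
theorem stmt2 (K B : Type*) [Field K]
    [NonAssocRing B] [Module K B] [SMulCommClass K B B] [IsScalarTower K B B]
    (σ : B →ₗ[K] B) (hσmul : ∀ x y : B, σ (x * y) = σ y * σ x)
    (hσone : σ 1 = 1) (hσinv : ∀ x : B, σ (σ x) = x)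
    (q : K) (hq : q ≠ 0)
    (R : B ⊗[K] (AdjoinRoot (Polynomial.X ^ 2 - Polynomial.C q)) →ₗ[K]
         (AdjoinRoot (Polynomial.X ^ 2 - Polynomial.C q)) ⊗[K] B)
    (hR1 : ∀ b : B,
      R (b ⊗ₜ[K] (1 : AdjoinRoot (Polynomial.X ^ 2 - Polynomial.C q))) = 1 ⊗ₜ[K] b)
    (hRv : ∀ b : B,
      R (b ⊗ₜ[K] AdjoinRoot.root (Polynomial.X ^ 2 - Polynomial.C q)) =
        (AdjoinRoot.root (Polynomial.X ^ 2 - Polynomial.C q)) ⊗ₜ[K] σ b) :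
    IsAltTwistingMap K (AdjoinRoot (Polynomial.X ^ 2 - Polynomial.C q)) B
      (Submodule.span K ({AdjoinRoot.root (Polynomial.X ^ 2 - Polynomial.C q)} :
        Set (AdjoinRoot (Polynomial.X ^ 2 - Polynomial.C q)))) R :=
  stmt2_general K B σ hσmul hσone hσinv q R hR1 hRv
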